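/- arXiv:1606.03529 — 6 statements merged into one kernel-verified Lean document; each statement's English description precedes it below -/
import Mathlib

section
/- Let F ∈ ℝ^{n×r} be a full column rank matrix and G ∈ ℝ^{n×r}. Then FGᵀ + GFᵀ is positive semidefinite if and only if there exists Ω ∈ ℝ^{r×r} such that G = FΩ and Ω + Ωᵀ is positive semidefinite. -/
/-!
If `G = F Ω` then `F Gᵀ + G Fᵀ = F (Ω + Ωᵀ) Fᵀ`, which is positive semidefinite with `Ω + Ωᵀ`.
Conversely, the quadratic form of `A = F Gᵀ + G Fᵀ` vanishes on `ker Fᵀ`, so positivity gives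
`A x = F Gᵀ x = 0` there, and injectivity of `F` yields `ker Fᵀ ⊆ ker Gᵀ`. Hence `G = F Ω` with
`Ω = L G` for a left inverse `L` of `F`, and `Ω + Ωᵀ = L A Lᵀ` is positive semidefinite.
-/

open Matrix

open scoped ComplexOrder

namespace Matrix

variable {m n : Type*} [Fintype n]

theorem mul_add_conjTranspose_mul_conjTranspose {R : Type*} [CommRing R] [StarRing R]
    (F : Matrix m n R) (Ω : Matrix n n R) : F * (Ω + Ωᴴ) * Fᴴ = F * (F * Ω)ᴴ + F * Ω * Fᴴ := by
  rw [Matrix.mul_add, Matrix.add_mul, conjTranspose_mul, ← Matrix.mul_assoc, add_comm]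

variable [Fintype m]

theorem exists_mul_eq_one_of_rank_eq_card {K : Type*} [Field K] [DecidableEq n]
    {A : Matrix m n K} (hA : A.rank = Fintype.card n) : ∃ L : Matrix n m K, L * A = 1 := by
  have hsurj : Function.Surjective Aᵀ.mulVec := by
    have hrange : LinearMap.range Aᵀ.mulVecLin = ⊤ := by
      apply Submodule.eq_top_of_finrank_eq
      rw [← Matrix.rank, rank_transpose, hA, Module.finrank_fintype_fun_eq_card]
    exact LinearMap.range_eq_top.mp hrange
  obtain ⟨S, hS⟩ := mulVec_surjective_iff_exists_right_inverse.mp hsurj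
  exact ⟨Sᵀ, by rw [← transpose_transpose A, ← transpose_mul, hS, transpose_one]⟩

theorem eq_mul_mul_of_forall_vecMul_eq_zero {R : Type*} [Ring R] {l : Type*} [DecidableEq n]
    {A : Matrix m n R} {B : Matrix m l R} {L : Matrix n m R} (hL : L * A = 1)
    (h : ∀ x : m → R, x ᵥ* A = 0 → x ᵥ* B = 0) : B = A * (L * B) := by
  refine ext_iff_vecMul.mpr fun x => ?_
  have hker : (x - x ᵥ* (A * L)) ᵥ* A = 0 := by
    rw [sub_vecMul, vecMul_vecMul, Matrix.mul_assoc, hL, Matrix.mul_one, sub_self]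
  rw [← Matrix.mul_assoc, ← vecMul_vecMul, ← sub_eq_zero, ← sub_vecMul]
  exact h _ hker

theorem PosSemidef.of_mul_mul_conjTranspose {R : Type*} [CommRing R] [PartialOrder R]
    [StarRing R] [DecidableEq n] {F : Matrix m n R} {L : Matrix n m R} {M : Matrix n n R}
    (hL : L * F = 1) (h : (F * M * Fᴴ).PosSemidef) : M.PosSemidef := by
  simpa [← Matrix.mul_assoc, hL, Matrix.mul_assoc _ _ Lᴴ, ← conjTranspose_mul] using
    h.mul_mul_conjTranspose_same L

theorem conjTranspose_mulVec_eq_zero_of_posSemidef {𝕜 : Type*} [RCLike 𝕜]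
    {F G : Matrix m n 𝕜} (hA : (F * Gᴴ + G * Fᴴ).PosSemidef) (hF : Function.Injective F.mulVec)
    {x : m → 𝕜} (hx : Fᴴ *ᵥ x = 0) : Gᴴ *ᵥ x = 0 := by
  have hAx : (F * Gᴴ + G * Fᴴ) *ᵥ x = F *ᵥ (Gᴴ *ᵥ x) := by
    rw [add_mulVec, ← mulVec_mulVec, ← mulVec_mulVec, hx, mulVec_zero, add_zero]
  have hform : star x ⬝ᵥ (F * Gᴴ + G * Fᴴ) *ᵥ x = 0 := by
    have hxF : star x ᵥ* F = star (Fᴴ *ᵥ x) := by rw [star_mulVec, conjTranspose_conjTranspose]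
    rw [hAx, dotProduct_mulVec, hxF, hx, star_zero, zero_dotProduct]
  apply hF
  rw [← hAx, (hA.dotProduct_mulVec_zero_iff x).mp hform, mulVec_zero]

end Matrix

theorem stmt_6 (n r : ℕ) (F G : Matrix (Fin n) (Fin r) ℝ)
    (hF : F.rank = r) :
    (F * Gᵀ + G * Fᵀ).PosSemidef ↔
      ∃ Ω : Matrix (Fin r) (Fin r) ℝ, G = F * Ω ∧ (Ω + Ωᵀ).PosSemidef := by
  simp only [← conjTranspose_eq_transpose_of_trivial]
  constructor
  · intro hA
    obtain ⟨L, hL⟩ := exists_mul_eq_one_of_rank_eq_card (hF.trans (Fintype.card_fin r).symm)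
    have hinj : Function.Injective F.mulVec :=
      Function.LeftInverse.injective (g := L.mulVec) fun x => by rw [mulVec_mulVec, hL, one_mulVec]
    have hG : G = F * (L * G) := eq_mul_mul_of_forall_vecMul_eq_zero hL fun x hx => by
      rw [← mulVec_transpose, ← conjTranspose_eq_transpose_of_trivial] at hx ⊢
      exact conjTranspose_mulVec_eq_zero_of_posSemidef hA hinj hx
    refine ⟨L * G, hG, PosSemidef.of_mul_mul_conjTranspose hL ?_⟩
    rwa [mul_add_conjTranspose_mul_conjTranspose, ← hG]
  · rintro ⟨Ω, rfl, hΩ⟩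
    rw [← mul_add_conjTranspose_mul_conjTranspose]
    exact hΩ.mul_mul_conjTranspose_same F
end

section
/- Let A ∈ ℝ^{n×n}, B_2 ∈ ℝ^{n×m_2}. There exists a nonzero positive semidefinite Z ∈ S^n with He(AᵀZ) := AᵀZ + ZA positive semidefinite and B_2ᵀZ = 0 if and only if there exists λ ∈ ℂ with Re(λ) ≥ 0 such that rank(A − λ I_n, B_2) < n (i.e., (A, B_2) is not stabilizable). -/
/-!
A nonzero `w` with `wᵀ (A - λ I) = 0` and `wᵀ B₂ = 0` is exactly a rank defect of
`[A - λ I, B₂]`. Given such a `w` with `Re λ ≥ 0`, the real part `Z` of `w w*` works, because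
`Aᵀ (w w*) + (w w*) A = 2 Re λ · w w*`.

Conversely, `u* (Aᵀ Z + Z A) u = 0` whenever `Z u = 0`, so positivity forces `Z A u = 0`: the
kernel of `Z` is `A`-invariant, hence `range Z = (ker Z)ᗮ` is `Aᵀ`-invariant and contains an
eigenvector `w = Z u` of `Aᵀ`, which `B₂ᵀ` annihilates because `B₂ᵀ Z = 0`. Finally
`u* (Aᵀ Z + Z A) u = 2 Re λ · u* Z u` with `u* Z u > 0`, so `Re λ ≥ 0`.
-/

open Matrix
open scoped ComplexOrder

theorem Module.End.exists_hasEigenvector_mem_of_mem_invtSubmodule {K V : Type*} [Field K]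
    [IsAlgClosed K] [AddCommGroup V] [Module K V] [FiniteDimensional K V] {f : Module.End K V}
    {W : Submodule K V} (hW : W ∈ f.invtSubmodule) (hW0 : W ≠ ⊥) :
    ∃ μ, ∃ w ∈ W, f.HasEigenvector μ w := by
  have : Nontrivial W := Submodule.nontrivial_iff_ne_bot.mpr hW0
  obtain ⟨μ, hμ⟩ := Module.End.exists_eigenvalue
    (f.restrict ((f.mem_invtSubmodule_iff_forall_mem_of_mem).mp hW))
  obtain ⟨w, hw⟩ := hμ.exists_hasEigenvector
  refine ⟨μ, w, w.2, Module.End.hasEigenvector_iff.mpr ⟨?_, by simpa using hw.2⟩⟩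
  exact Module.End.mem_eigenspace_iff.mpr (congrArg Subtype.val hw.apply_eq_smul)

namespace Matrix

section Rank

variable {m n p K : Type*} [Fintype m] [Fintype n] [Field K]

theorem rank_lt_card_iff_exists_vecMul_eq_zero (M : Matrix m n K) :
    M.rank < Fintype.card m ↔ ∃ w ≠ 0, w ᵥ* M = 0 := by
  rw [rank_eq_finrank_span_row, ← Set.finrank, ← not_le,
    ← linearIndependent_iff_card_le_finrank_span, Fintype.not_linearIndependent_iff]
  simp only [ne_eq, and_comm, Function.ne_iff, Pi.zero_apply, vecMul_eq_sum, row]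

theorem rank_fromCols_sub_smul_one_lt_card_iff [Fintype p] [DecidableEq n] (A : Matrix n n K)
    (B : Matrix n p K) (lam : K) :
    (fromCols (A - lam • 1) B).rank < Fintype.card n ↔
      ∃ w ≠ 0, w ᵥ* A = lam • w ∧ w ᵥ* B = 0 := by
  rw [rank_lt_card_iff_exists_vecMul_eq_zero]
  simp only [vecMul_fromCols, ← Sum.elim_zero_zero, Sum.elim_eq_iff, vecMul_sub, vecMul_smul,
    vecMul_one, sub_eq_zero]

end Rank

section RealPart

variable {l m n : Type*}

theorem conjTranspose_map_ofReal (A : Matrix l m ℝ) :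
    (A.map Complex.ofReal)ᴴ = (A.map Complex.ofReal)ᵀ := by
  rw [← conjTranspose_map _ fun x => (Complex.conj_ofReal x).symm,
    conjTranspose_eq_transpose_of_trivial, transpose_map]

theorem map_ofReal_mul[Fintype m] (M : Matrix l m ℝ) (N : Matrix m n ℝ) :
    (M * N).map Complex.ofReal = M.map Complex.ofReal * N.map Complex.ofReal :=
  Matrix.map_mul (f := Complex.ofRealHom)

theorem map_re_ofReal_mul[Fintype m] (M : Matrix l m ℝ) (N : Matrix m n ℂ) :
    (M.map Complex.ofReal * N).map Complex.re = M * N.map Complex.re := by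
  ext i j
  simp [mul_apply, Complex.re_sum]

theorem map_re_mul_ofReal[Fintype m] (N : Matrix l m ℂ) (M : Matrix m n ℝ) :
    (N * M.map Complex.ofReal).map Complex.re = N.map Complex.re * M := by
  ext i j
  simp [mul_apply, Complex.re_sum]

theorem PosSemidef.map_re [Fintype n] {H : Matrix n n ℂ} (hH : H.PosSemidef) :
    (H.map Complex.re).PosSemidef := by
  rw [posSemidef_iff_dotProduct_mulVec] at hH ⊢
  refine ⟨?_, fun x => ?_⟩
  · ext i j
    simpa using congrArg Complex.re (congrFun₂ hH.1 i j)
  · have := (Complex.le_def.mp (hH.2 (fun i => (x i : ℂ)))).1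
    simpa [dotProduct, mulVec, Complex.re_sum, Finset.mul_sum, mul_left_comm] using this

theorem PosSemidef.map_ofReal [Fintype n] {Z : Matrix n n ℝ} (hZ : Z.PosSemidef) :
    (Z.map Complex.ofReal).PosSemidef := by
  obtain ⟨k, v, rfl⟩ := posSemidef_iff_eq_sum_vecMulVec.mp hZ
  refine posSemidef_iff_eq_sum_vecMulVec.mpr ⟨k, fun i j => (v i j : ℂ), ?_⟩
  ext a b
  simp [sum_apply, vecMulVec_apply]

end RealPart

section Lyapunov

variable {n : Type*} [Fintype n]

theorem IsHermitian.star_vecMul {α : Type*} [NonUnitalSemiring α] [StarRing α]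
    {Z : Matrix n n α} (hZ : Z.IsHermitian) (x : n → α) : star x ᵥ* Z = star (Z *ᵥ x) := by
  rw [star_mulVec, hZ.eq]

section RCLike

variable {𝕜 : Type*} [RCLike 𝕜]

theorem IsHermitian.exists_mulVec_eq_of_orthogonal_ker [DecidableEq n] {Z : Matrix n n 𝕜}
    (hZ : Z.IsHermitian) {v : n → 𝕜} (hv : ∀ y, Z *ᵥ y = 0 → v ⬝ᵥ star y = 0) :
    ∃ u, Z *ᵥ u = v := by
  have hT := isSymmetric_toEuclideanLin_iff.mpr hZ
  have : WithLp.toLp 2 v ∈ LinearMap.range Z.toEuclideanLin := by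
    rw [← Submodule.orthogonal_orthogonal (LinearMap.range _), hT.orthogonal_range]
    exact fun y hy => hv y.ofLp (congrArg WithLp.ofLp hy)
  obtain ⟨u, hu⟩ := this
  exact ⟨u.ofLp, congrArg WithLp.ofLp hu⟩

variable {Z A : Matrix n n 𝕜}

theorem IsHermitian.mulVec_mulVec_eq_zero_of_posSemidef (hZ : Z.IsHermitian)
    (hL : (Aᴴ * Z + Z * A).PosSemidef) {x : n → 𝕜} (hx : Z *ᵥ x = 0) :
    Z *ᵥ (A *ᵥ x) = 0 := by
  have hq : star x ⬝ᵥ ((Aᴴ * Z + Z * A) *ᵥ x) = 0 := by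
    simp [add_mulVec, ← mulVec_mulVec, hx, dotProduct_mulVec _ Z, hZ.star_vecMul]
  simpa [add_mulVec, ← mulVec_mulVec, hx] using (hL.dotProduct_mulVec_zero_iff x).mp hq

theorem IsHermitian.exists_mulVec_eq_conjTranspose_mulVec_mulVec [DecidableEq n]
    (hZ : Z.IsHermitian) (hL : (Aᴴ * Z + Z * A).PosSemidef) (u : n → 𝕜) :
    ∃ v, Z *ᵥ v = Aᴴ *ᵥ (Z *ᵥ u) := by
  refine hZ.exists_mulVec_eq_of_orthogonal_ker fun y hy => ?_
  rw [dotProduct_comm, dotProduct_mulVec, ← star_mulVec, dotProduct_mulVec,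
    hZ.star_vecMul, hZ.mulVec_mulVec_eq_zero_of_posSemidef hL hy]
  simp

theorem IsHermitian.dotProduct_conjTranspose_mul_add_mul_mulVec (hZ : Z.IsHermitian) {lam : 𝕜}
    {u : n → 𝕜} (heig : Aᴴ *ᵥ (Z *ᵥ u) = lam • (Z *ᵥ u)) :
    star u ⬝ᵥ ((Aᴴ * Z + Z * A) *ᵥ u) = (lam + star lam) * (star u ⬝ᵥ (Z *ᵥ u)) := by
  have hstar : star (Z *ᵥ u) ⬝ᵥ u = star u ⬝ᵥ (Z *ᵥ u) := by
    rw [← hZ.star_vecMul, ← dotProduct_mulVec]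
  rw [add_mulVec, ← mulVec_mulVec, ← mulVec_mulVec, dotProduct_add, heig, dotProduct_mulVec _ Z,
    hZ.star_vecMul, dotProduct_mulVec, ← conjTranspose_conjTranspose A, ← star_mulVec, heig,
    star_smul, smul_dotProduct, dotProduct_smul, hstar, smul_eq_mul, smul_eq_mul, add_mul]

theorem conjTranspose_mul_vecMulVec_add_vecMulVec_mul {lam : 𝕜} {w : n → 𝕜}
    (heig : Aᴴ *ᵥ w = lam • w) :
    Aᴴ * vecMulVec w (star w) + vecMulVec w (star w) * A =
      (lam + star lam) • vecMulVec w (star w) := by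
  have hstar : star w ᵥ* A = star lam • star w := by
    rw [← star_smul, ← heig, star_mulVec, conjTranspose_conjTranspose]
  rw [mul_vecMulVec, vecMulVec_mul, heig, hstar, smul_vecMulVec, vecMulVec_smul, add_smul]

end RCLike

variable {Z A : Matrix n n ℂ}

theorem PosSemidef.re_nonneg_of_conjTranspose_mulVec_eq_smul (hZ : Z.PosSemidef)
    (hL : (Aᴴ * Z + Z * A).PosSemidef) {lam : ℂ} {u : n → ℂ} (hu : Z *ᵥ u ≠ 0)
    (heig : Aᴴ *ᵥ (Z *ᵥ u) = lam • (Z *ᵥ u)) : 0 ≤ lam.re := by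
  obtain ⟨r, hr, ht⟩ : ∃ r : ℝ, 0 < r ∧ star u ⬝ᵥ (Z *ᵥ u) = r := by
    refine ⟨_, ?_, Complex.eq_re_of_ofReal_le (hZ.dotProduct_mulVec_nonneg u)⟩
    refine (Complex.pos_iff.mp (lt_of_le_of_ne (hZ.dotProduct_mulVec_nonneg u) ?_)).1
    exact fun h => hu ((hZ.dotProduct_mulVec_zero_iff u).mp h.symm)
  have hq := hL.dotProduct_mulVec_nonneg u
  rw [hZ.isHermitian.dotProduct_conjTranspose_mul_add_mul_mulVec heig, ht, Complex.star_def,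
    Complex.add_conj, ← Complex.ofReal_mul, Complex.zero_le_real] at hq
  linarith [nonneg_of_mul_nonneg_left hq hr]

theorem PosSemidef.exists_conjTranspose_mulVec_eq_smul [DecidableEq n] (hZ : Z.PosSemidef)
    (hZ0 : Z ≠ 0) (hL : (Aᴴ * Z + Z * A).PosSemidef) :
    ∃ (lam : ℂ) (u : n → ℂ), 0 ≤ lam.re ∧ Z *ᵥ u ≠ 0 ∧ Aᴴ *ᵥ (Z *ᵥ u) = lam • (Z *ᵥ u) := by
  have hinv : LinearMap.range Z.mulVecLin ∈ Module.End.invtSubmodule Aᴴ.mulVecLin := by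
    refine (Module.End.mem_invtSubmodule_iff_forall_mem_of_mem _).mpr ?_
    rintro _ ⟨u, rfl⟩
    exact hZ.isHermitian.exists_mulVec_eq_conjTranspose_mulVec_mulVec hL u
  have hne : LinearMap.range Z.mulVecLin ≠ ⊥ := by
    rwa [ne_eq, LinearMap.range_eq_bot, ← toLin'_apply', map_eq_zero_iff _ toLin'.injective]
  obtain ⟨lam, _, ⟨u, rfl⟩, hw⟩ :=
    Module.End.exists_hasEigenvector_mem_of_mem_invtSubmodule hinv hne
  exact ⟨lam, u, hZ.re_nonneg_of_conjTranspose_mulVec_eq_smul hL hw.2 hw.apply_eq_smul, hw.2,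
    hw.apply_eq_smul⟩

end Lyapunov

theorem exists_posSemidef_of_vecMul_eq_smul {n m : Type*} [Fintype n] [Fintype m]
    {A : Matrix n n ℝ} {B : Matrix n m ℝ} {lam : ℂ} (hlam : 0 ≤ lam.re) {w : n → ℂ} (hw : w ≠ 0)
    (hwA : w ᵥ* A.map Complex.ofReal = lam • w) (hwB : w ᵥ* B.map Complex.ofReal = 0) :
    ∃ Z : Matrix n n ℝ, Z ≠ 0 ∧ Z.PosSemidef ∧ (Aᵀ * Z + Z * A).PosSemidef ∧ Bᵀ * Z = 0 := by
  set H := vecMulVec w (star w)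
  have hH : H.PosSemidef := posSemidef_vecMulVec_self_star w
  have hL : Aᵀ * H.map Complex.re + H.map Complex.re * A = (2 * lam.re) • H.map Complex.re := by
    rw [← map_re_ofReal_mul, ← map_re_mul_ofReal, transpose_map, ← conjTranspose_map_ofReal,
      ← Matrix.map_add _ Complex.add_re, conjTranspose_mul_vecMulVec_add_vecMulVec_mul
        (by rwa [conjTranspose_map_ofReal, mulVec_transpose]), Complex.star_def, Complex.add_conj]
    ext i j
    simp [H]
  refine ⟨H.map Complex.re, ?_, hH.map_re, hL ▸ hH.map_re.smul (by positivity), ?_⟩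
  · obtain ⟨i, hi⟩ := Function.ne_iff.mp hw
    intro h
    have := congrFun₂ h i i
    simp only [H, map_apply, vecMulVec_apply, Pi.star_apply, RCLike.star_def, Complex.mul_conj,
      Complex.ofReal_re, zero_apply, map_eq_zero] at this
    exact hi this
  · rw [← map_re_ofReal_mul, transpose_map, mul_vecMulVec, mulVec_transpose, hwB]
    ext i j
    simp

end Matrix

theorem stmt_7 (n m₂ : ℕ) (A : Matrix (Fin n) (Fin n) ℝ)
    (B₂ : Matrix (Fin n) (Fin m₂) ℝ) :
    (∃ Z : Matrix (Fin n) (Fin n) ℝ, Z ≠ 0 ∧ Z.PosSemidef ∧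
      (Aᵀ * Z + Z * A).PosSemidef ∧ B₂ᵀ * Z = 0) ↔
    (∃ lam : ℂ, 0 ≤ lam.re ∧
      (Matrix.fromCols (A.map Complex.ofReal - lam • 1) (B₂.map Complex.ofReal)).rank < n) := by
  have hrank := rank_fromCols_sub_smul_one_lt_card_iff (A.map Complex.ofReal)
    (B₂.map Complex.ofReal)
  simp only [Fintype.card_fin] at hrank
  simp only [hrank]
  constructor
  · rintro ⟨Z, hZ0, hZ, hL, hB⟩
    have hLc : (Aᵀ * Z + Z * A).map Complex.ofReal = (A.map Complex.ofReal)ᴴ *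
        Z.map Complex.ofReal + Z.map Complex.ofReal * A.map Complex.ofReal := by
      rw [Matrix.map_add _ Complex.ofReal_add, map_ofReal_mul, map_ofReal_mul, transpose_map,
        conjTranspose_map_ofReal]
    have hZ0c : Z.map Complex.ofReal ≠ 0 := (map_injective Complex.ofReal_injective).ne_iff'
      (Matrix.map_zero _ Complex.ofReal_zero) |>.mpr hZ0
    obtain ⟨lam, u, hlam, hw0, heig⟩ := hZ.map_ofReal.exists_conjTranspose_mulVec_eq_smul hZ0c
      (hLc ▸ hL.map_ofReal)
    refine ⟨lam, hlam, _, hw0, ?_, ?_⟩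
    · rwa [← mulVec_transpose, ← conjTranspose_map_ofReal]
    · rw [← mulVec_transpose, mulVec_mulVec, ← transpose_map, ← map_ofReal_mul, hB]
      simp
  · rintro ⟨lam, hlam, w, hw0, hwA, hwB⟩
    exact exists_posSemidef_of_vecMul_eq_smul hlam hw0 hwA hwB
end

section
/- (If direction) Suppose there exist λ ∈ ℂ with Re(λ) ≥ 0 and η ∈ ℂ^n \ {0} with Aᵀη = λη and B_2ᵀη = 0. Then Z := η η̄ᵀ + η̄ ηᵀ is a real symmetric positive semidefinite matrix satisfying AᵀZ + ZAᵀᵀ = (λ + λ̄) Z ⪰ 0 and B_2ᵀZ = 0; moreover Z ≠ 0. -/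
/-!
Write `Z = η η̄ᵀ + η̄ ηᵀ`. Both summands are Hermitian rank-one positive semidefinite matrices, and
`Z` is real because its two summands are complex conjugates of each other. Since `Aᵀ` is real, `η̄`
is an eigenvector of `Aᵀ` for `λ̄`, so multiplying `Aᵀ` into the outer products just scales them:
`Aᵀ Z = λ η η̄ᵀ + λ̄ η̄ ηᵀ` and `Z A = λ̄ η η̄ᵀ + λ η̄ ηᵀ`, which add up to `(λ + λ̄) Z = 2 Re(λ) Z`.
In the same way `B₂ᵀ η = 0` forces `B₂ᵀ Z = 0`, and `Z ≠ 0` because its diagonal is `2 |ηᵢ|²`.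
-/

open Matrix ComplexOrder

variable {m n : Type*}

def outerAddConj (v : n → ℂ) : Matrix n n ℂ :=
  vecMulVec v (star v) + vecMulVec (star v) v

theorem im_outerAddConj_apply (v : n → ℂ) (i j : n) : (outerAddConj v i j).im = 0 := by
  simp [outerAddConj, vecMulVec_apply]
  ring

theorem outerAddConj_apply_self (v : n → ℂ) (i : n) :
    outerAddConj v i i = 2 * (‖v i‖ : ℂ) ^ 2 := by
  simp [outerAddConj, vecMulVec_apply, Complex.mul_conj', Complex.conj_mul', two_mul]

theorem outerAddConj_ne_zero {v : n → ℂ} (hv : v ≠ 0) : outerAddConj v ≠ 0 := by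
  obtain ⟨i, hi⟩ := Function.ne_iff.mp hv
  intro h
  have := outerAddConj_apply_self v i
  simp_all

theorem posSemidef_outerAddConj [Finite n] (v : n → ℂ) : (outerAddConj v).PosSemidef :=
  (posSemidef_vecMulVec_self_star v).add (posSemidef_vecMulVec_star_self v)

theorem map_ofReal_mulVec_star [Fintype n] (M : Matrix m n ℝ) (v : n → ℂ) :
    M.map Complex.ofReal *ᵥ star v = star (M.map Complex.ofReal *ᵥ v) := by
  ext i
  simp [mulVec, dotProduct]

theorem map_ofReal_mul_outerAddConj_eq_zero [Fintype n] {M : Matrix m n ℝ} {v : n → ℂ}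
    (hv : M.map Complex.ofReal *ᵥ v = 0) : M.map Complex.ofReal * outerAddConj v = 0 := by
  simp [outerAddConj, Matrix.mul_add, mul_vecMulVec, map_ofReal_mulVec_star, hv]

theorem map_ofReal_mul_outerAddConj_add_mul_transpose [Fintype n] (M : Matrix n n ℝ)
    {μ : ℂ} {v : n → ℂ} (hv : M.map Complex.ofReal *ᵥ v = μ • v) :
    M.map Complex.ofReal * outerAddConj v + outerAddConj v * Mᵀ.map Complex.ofReal
      = (μ + starRingEnd ℂ μ) • outerAddConj v := by
  have hstar : M.map Complex.ofReal *ᵥ star v = starRingEnd ℂ μ • star v := by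
    rw [map_ofReal_mulVec_star, hv, star_smul]
    rfl
  simp only [outerAddConj, Matrix.mul_add, Matrix.add_mul, mul_vecMulVec, vecMulVec_mul,
    transpose_map, vecMul_transpose, hv, hstar, smul_vecMulVec, vecMulVec_smul]
  module

theorem add_conj_nonneg {μ : ℂ} (hμ : 0 ≤ μ.re) : 0 ≤ μ + starRingEnd ℂ μ := by
  rw [Complex.add_conj]
  exact Complex.zero_le_real.mpr (by positivity)

theorem stmt_9 (n m₂ : ℕ) (A : Matrix (Fin n) (Fin n) ℝ)
    (B₂ : Matrix (Fin n) (Fin m₂) ℝ)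
    (lam : ℂ) (hlam : 0 ≤ lam.re)
    (η : Fin n → ℂ) (hη : η ≠ 0)
    (heig : (Aᵀ.map Complex.ofReal).mulVec η = lam • η)
    (hB : (B₂ᵀ.map Complex.ofReal).mulVec η = 0) :
    ∀ Z : Matrix (Fin n) (Fin n) ℂ,
      Z = Matrix.vecMulVec η (star η) + Matrix.vecMulVec (star η) η →
      (∀ i j, (Z i j).im = 0) ∧ Z.PosSemidef ∧
      (Aᵀ.map Complex.ofReal) * Z + Z * (A.map Complex.ofReal) = (lam + starRingEnd ℂ lam) • Z ∧
      ((Aᵀ.map Complex.ofReal) * Z + Z * (A.map Complex.ofReal)).PosSemidef ∧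
      (B₂ᵀ.map Complex.ofReal) * Z = 0 ∧ Z ≠ 0 := by
  rintro Z rfl
  have hZ := posSemidef_outerAddConj η
  have hlyap := map_ofReal_mul_outerAddConj_add_mul_transpose Aᵀ heig
  exact ⟨im_outerAddConj_apply η, hZ, hlyap, hlyap ▸ hZ.smul (add_conj_nonneg hlam),
    map_ofReal_mul_outerAddConj_eq_zero hB, outerAddConj_ne_zero hη⟩
end

section
/- Suppose there exists λ ∈ ℂ with Re(λ) ≤ 0 such that rank of the (n+p_1)×(n+m_2) block matrix [[A − λI_n, B_2],[C_1, D_12]] is less than n + m_2, and that the stacked matrix [B_2; D_12] has full column rank. Then there exist a nonzero positive semidefinite X ∈ S^n and Y ∈ ℝ^{m_2×n} such that C_1 X + D_12 Y = 0 and −(AX + B_2Y) − (AX + B_2Y)ᵀ is positive semidefinite. -/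
/-!
The invariant zero `λ` gives a complex null vector `(η, ξ)` of the block matrix:
`Aη + B₂ξ = λη` and `C₁η + D₁₂ξ = 0`, and `η ≠ 0` because `[B₂; D₁₂]` has trivial kernel.
Put `X = Re (η ηᴴ)` and `Y = Re (ξ ηᴴ)`. A real matrix `P` satisfies `P · Re (w ηᴴ) = Re ((P w) ηᴴ)`,
so `C₁X + D₁₂Y = Re (0 · ηᴴ) = 0` and `AX + B₂Y = Re (λ η ηᴴ)`, whence
`(AX + B₂Y) + (AX + B₂Y)ᵀ = 2 Re λ · X`, which is negative semidefinite.
-/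

open Matrix

namespace Matrix

variable {l m n : Type*}

section Rank

variable {K : Type*} [Field K]

theorem rank_add_finrank_ker_mulVecLin [Fintype n] (A : Matrix m n K) :
    A.rank + Module.finrank K (LinearMap.ker A.mulVecLin) = Fintype.card n := by
  rw [rank, LinearMap.finrank_range_add_finrank_ker, Module.finrank_fintype_fun_eq_card]

theorem exists_mulVec_eq_zero_of_rank_lt [Fintype n] (A : Matrix m n K)
    (h : A.rank < Fintype.card n) : ∃ v ≠ 0, A *ᵥ v = 0 := by
  have hker : LinearMap.ker A.mulVecLin ≠ ⊥ := by
    intro hbot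
    have := A.rank_add_finrank_ker_mulVecLin
    rw [hbot, finrank_bot] at this
    omega
  obtain ⟨v, hv, hv0⟩ := Submodule.exists_mem_ne_zero_of_ne_bot hker
  exact ⟨v, hv0, hv⟩

theorem eq_zero_of_mulVec_eq_zero_of_rank_eq_card [Fintype n] (A : Matrix m n K)
    (h : A.rank = Fintype.card n) {v : n → K} (hv : A *ᵥ v = 0) : v = 0 := by
  have hker : Module.finrank K (LinearMap.ker A.mulVecLin) = 0 := by
    have := A.rank_add_finrank_ker_mulVecLin
    omega
  exact ker_mulVecLin_eq_bot_iff.mp (Submodule.finrank_eq_zero.mp hker) v hv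

end Rank

open Complex

theorem re_map_ofReal_mulVec [Fintype n] (P : Matrix m n ℝ) (w : n → ℂ) (i : m) :
    ((P.map ofReal *ᵥ w) i).re = (P *ᵥ fun k => (w k).re) i := by
  simp [mulVec, dotProduct, re_sum]

theorem im_map_ofReal_mulVec [Fintype n] (P : Matrix m n ℝ) (w : n → ℂ) (i : m) :
    ((P.map ofReal *ᵥ w) i).im = (P *ᵥ fun k => (w k).im) i := by
  simp [mulVec, dotProduct, im_sum]

theorem map_re_map_ofReal_mul [Fintype n] (P : Matrix l n ℝ) (Q : Matrix n m ℂ) :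
    (P.map ofReal * Q).map re = P * Q.map re := by
  ext i j
  simp [mul_apply, re_sum]

theorem eq_zero_of_map_ofReal_mulVec_eq_zero [Fintype n] (P : Matrix m n ℝ)
    (h : P.rank = Fintype.card n) {w : n → ℂ} (hw : P.map ofReal *ᵥ w = 0) : w = 0 := by
  have hre : (fun k => (w k).re) = 0 :=
    P.eq_zero_of_mulVec_eq_zero_of_rank_eq_card h <| funext fun i => by
      rw [← re_map_ofReal_mulVec, hw]; rfl
  have him : (fun k => (w k).im) = 0 :=
    P.eq_zero_of_mulVec_eq_zero_of_rank_eq_card h <| funext fun i => by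
      rw [← im_map_ofReal_mulVec, hw]; rfl
  exact funext fun k => Complex.ext (congrFun hre k) (congrFun him k)

/-- `reOuter w u = Re (w uᴴ)`; thus `reOuter η η = (η η̄ᵀ + η̄ ηᵀ) / 2`. -/
def reOuter (w : m → ℂ) (u : n → ℂ) : Matrix m n ℝ :=
  (vecMulVec w (star u)).map re

theorem mul_reOuter [Fintype m] (P : Matrix l m ℝ) (w : m → ℂ) (u : n → ℂ) :
    P * reOuter w u = reOuter (P.map ofReal *ᵥ w) u := by
  rw [reOuter, ← map_re_map_ofReal_mul, mul_vecMulVec, reOuter]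

theorem reOuter_add (w w' : m → ℂ) (u : n → ℂ) :
    reOuter (w + w') u = reOuter w u + reOuter w' u := by
  ext i j
  simp [reOuter, vecMulVec_apply, add_mul]

theorem reOuter_self_eq (u : n → ℂ) :
    reOuter u u = vecMulVec (fun i => (u i).re) (fun i => (u i).re)
      + vecMulVec (fun i => (u i).im) (fun i => (u i).im) := by
  ext i j
  simp [reOuter, vecMulVec_apply]

theorem posSemidef_reOuter_self [Fintype n] (u : n → ℂ) : (reOuter u u).PosSemidef := by
  rw [reOuter_self_eq]
  exact (posSemidef_vecMulVec_self_star _).add (posSemidef_vecMulVec_self_star _)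

theorem reOuter_self_ne_zero {u : n → ℂ} (hu : u ≠ 0) : reOuter u u ≠ 0 := by
  obtain ⟨i, hi⟩ := Function.ne_iff.mp hu
  intro h
  have hii := congrFun (congrFun h i) i
  simp [reOuter, vecMulVec_apply, mul_conj] at hii
  exact hi hii

theorem reOuter_smul_add_transpose (c : ℂ) (u : n → ℂ) :
    reOuter (c • u) u + (reOuter (c • u) u)ᵀ = (2 * c.re) • reOuter u u := by
  ext i j
  simp [reOuter, vecMulVec_apply, mul_re]
  ring

theorem exists_zeroDirections {p : Type*} [Fintype n] [DecidableEq n] [Fintype m] [Fintype p]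
    (A : Matrix n n ℝ) (B : Matrix n m ℝ) (C : Matrix p n ℝ) (D : Matrix p m ℝ) (lam : ℂ)
    (hrank : (fromBlocks (A.map ofReal - lam • 1) (B.map ofReal) (C.map ofReal)
      (D.map ofReal)).rank < Fintype.card n + Fintype.card m)
    (hfull : (fromRows B D).rank = Fintype.card m) :
    ∃ (η : n → ℂ) (ξ : m → ℂ), η ≠ 0 ∧ A.map ofReal *ᵥ η + B.map ofReal *ᵥ ξ = lam • η ∧
      C.map ofReal *ᵥ η + D.map ofReal *ᵥ ξ = 0 := by
  obtain ⟨v, hv, hMv⟩ := exists_mulVec_eq_zero_of_rank_lt _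
    (hrank.trans_eq (Fintype.card_sum ..).symm)
  obtain ⟨η, ξ, rfl⟩ : ∃ η ξ, v = Sum.elim η ξ := ⟨_, _, (Sum.elim_comp_inl_inr v).symm⟩
  rw [fromBlocks_mulVec, Sum.elim_comp_inl, Sum.elim_comp_inr, ← Sum.elim_zero_zero,
    Sum.elim_eq_iff] at hMv
  obtain ⟨h1, h2⟩ := hMv
  rw [sub_mulVec, smul_mulVec, one_mulVec, sub_add_eq_add_sub, sub_eq_zero] at h1
  refine ⟨η, ξ, fun hη => hv ?_, h1, h2⟩
  -- With `η = 0` the kernel equations say `[B; D] ξ = 0`, so full column rank forces `ξ = 0`.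
  have hξ : ξ = 0 := by
    refine eq_zero_of_map_ofReal_mulVec_eq_zero _ hfull ?_
    rw [hη, mulVec_zero, zero_add, smul_zero] at h1
    rw [hη, mulVec_zero, zero_add] at h2
    rw [fromRows_map, fromRows_mulVec, h1, h2, Sum.elim_zero_zero]
  rw [hη, hξ, Sum.elim_zero_zero]

end Matrix

theorem stmt_10 (n m₂ p₁ : ℕ) (A : Matrix (Fin n) (Fin n) ℝ)
    (B₂ : Matrix (Fin n) (Fin m₂) ℝ) (C₁ : Matrix (Fin p₁) (Fin n) ℝ)
    (D₁₂ : Matrix (Fin p₁) (Fin m₂) ℝ)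
    (hzero : ∃ lam : ℂ, lam.re ≤ 0 ∧
      (Matrix.fromBlocks (A.map Complex.ofReal - lam • 1) (B₂.map Complex.ofReal)
        (C₁.map Complex.ofReal) (D₁₂.map Complex.ofReal)).rank < n + m₂)
    (hfull : (Matrix.fromRows B₂ D₁₂).rank = m₂) :
    ∃ (X : Matrix (Fin n) (Fin n) ℝ) (Y : Matrix (Fin m₂) (Fin n) ℝ),
      X ≠ 0 ∧ X.PosSemidef ∧ C₁ * X + D₁₂ * Y = 0 ∧
      ((-(A * X + B₂ * Y)) - (A * X + B₂ * Y)ᵀ).PosSemidef := by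
  obtain ⟨lam, hlam, hrank⟩ := hzero
  obtain ⟨η, ξ, hη, h1, h2⟩ := exists_zeroDirections A B₂ C₁ D₁₂ lam (by simpa using hrank)
    (by simpa using hfull)
  refine ⟨reOuter η η, reOuter ξ η, reOuter_self_ne_zero hη, posSemidef_reOuter_self η, ?_, ?_⟩
  · rw [mul_reOuter, mul_reOuter, ← reOuter_add, h2]
    ext
    simp [reOuter]
  · have hAXBY : A * reOuter η η + B₂ * reOuter ξ η = reOuter (lam • η) η := by
      rw [mul_reOuter, mul_reOuter, ← reOuter_add, h1]
    rw [hAXBY, ← neg_add', reOuter_smul_add_transpose, ← neg_smul]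
    exact (posSemidef_reOuter_self η).smul (by linarith)
end

section
/- Let λ_1, …, λ_r be real numbers and suppose for each j there exist η_j ∈ ℝ^n, ξ_j ∈ ℝ^{m_2} with Aη_j + B_2ξ_j = λ_j η_j and C_1η_j + D_12ξ_j = 0, with η_1, …, η_r linearly independent. Set H = (η_1,…,η_r), R = (ξ_1,…,ξ_r), X̂ = HHᵀ, Ŷ = RHᵀ. Then −He(AX̂ + B_2Ŷ) = −2 H Diag(λ_1,…,λ_r) Hᵀ; in particular, if all λ_j < 0 this matrix is positive semidefinite of rank r, so (γ=0, X̂, Ŷ) certifies non-strong-feasibility of the dual LMI of the H_∞ state feedback problem. -/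
/-!
The eigen-relations `A ηⱼ + B₂ ξⱼ = λⱼ ηⱼ`, read column by column, say `A H + B₂ R = H Λ`
with `Λ = Diag(λ₁, …, λᵣ)`. Multiplying on the right by `Hᵀ` gives `A X̂ + B₂ Ŷ = H Λ Hᵀ`, a
symmetric matrix, so `-He(A X̂ + B₂ Ŷ) = H (-2Λ) Hᵀ`. When every `λⱼ < 0` the diagonal `-2Λ` is
positive, hence `H (-2Λ) Hᵀ = N Nᵀ` with `N = H √(-2Λ)`: it is positive semidefinite and its rank
is `rank N = rank H = r`, the columns of `H` being independent.
-/

open Matrix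

namespace Matrix

variable {m n k : Type*} [Fintype n] [DecidableEq n]

theorem mul_add_mul_eq_mul_diagonal_of_mulVec_col [Fintype m] [Fintype k] {R : Type*}
    [CommSemiring R] {A : Matrix m m R} {B : Matrix m k R} {H : Matrix m n R}
    {K : Matrix k n R} {d : n → R}
    (h : ∀ j, A *ᵥ H.col j + B *ᵥ K.col j = d j • H.col j) :
    A * H + B * K = H * diagonal d := by
  ext i j
  rw [add_apply, mul_diagonal]
  simpa [mul_apply, mulVec, dotProduct, mul_comm] using congrFun (h j) i

theorem transpose_mul_diagonal_mul_transpose {R : Type*} [CommSemiring R]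
    (H : Matrix m n R) (d : n → R) : (H * diagonal d * Hᵀ)ᵀ = H * diagonal d * Hᵀ := by
  rw [transpose_mul, transpose_mul, transpose_transpose, diagonal_transpose, Matrix.mul_assoc]

omit [DecidableEq n] in
theorem rank_eq_card_of_linearIndependent_col [Fintype m] {K : Type*} [Field K] (H : Matrix m n K)
    (h : LinearIndependent K H.col) : H.rank = Fintype.card n := by
  rw [← rank_transpose]
  exact h.rank_matrix (M := Hᵀ)

theorem mul_diagonal_mul_transpose_eq_self_mul_transpose_of_nonneg (H : Matrix m n ℝ)
    {d : n → ℝ} (hd : 0 ≤ d) :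
    H * diagonal d * Hᵀ
      = H * diagonal (fun j => √(d j)) * (H * diagonal (fun j => √(d j)))ᵀ := by
  have hsqrt : diagonal (fun j => √(d j)) * diagonal (fun j => √(d j)) = diagonal d := by
    rw [diagonal_mul_diagonal]
    exact congrArg diagonal (funext fun j => Real.mul_self_sqrt (hd j))
  rw [transpose_mul, diagonal_transpose, ← hsqrt]
  simp only [Matrix.mul_assoc]

theorem rank_mul_diagonal_mul_transpose_of_pos [Fintype m] (H : Matrix m n ℝ) {d : n → ℝ}
    (hd : ∀ j, 0 < d j) : (H * diagonal d * Hᵀ).rank = H.rank := by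
  have hdet : IsUnit (diagonal fun j => √(d j)).det := by
    rw [det_diagonal]
    exact (Finset.prod_pos fun j _ => Real.sqrt_pos.2 (hd j)).ne'.isUnit
  rw [mul_diagonal_mul_transpose_eq_self_mul_transpose_of_nonneg H fun j => (hd j).le,
    rank_self_mul_transpose, rank_mul_eq_left_of_isUnit_det _ _ hdet]

theorem posSemidef_mul_diagonal_mul_transpose [Fintype m] (H : Matrix m n ℝ) {d : n → ℝ}
    (hd : 0 ≤ d) :
    (H * diagonal d * Hᵀ).PosSemidef := by
  simpa using (posSemidef_diagonal_iff.2 hd).mul_mul_conjTranspose_same H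

end Matrix

theorem stmt_14_general (n m₂ r : ℕ) (A : Matrix (Fin n) (Fin n) ℝ)
    (B₂ : Matrix (Fin n) (Fin m₂) ℝ)
    (lam : Fin r → ℝ)
    (H : Matrix (Fin n) (Fin r) ℝ) (R : Matrix (Fin m₂) (Fin r) ℝ)
    (heig : ∀ j, A.mulVec (fun i => H i j) + B₂.mulVec (fun i => R i j)
        = lam j • (fun i => H i j))
    (hli : LinearIndependent ℝ (fun j => (fun i => H i j)))
    (Xhat : Matrix (Fin n) (Fin n) ℝ) (hXhat : Xhat = H * Hᵀ)
    (Yhat : Matrix (Fin m₂) (Fin n) ℝ) (hYhat : Yhat = R * Hᵀ) :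
    ((-(A * Xhat + B₂ * Yhat)) - (A * Xhat + B₂ * Yhat)ᵀ
        = (-2 : ℝ) • (H * Matrix.diagonal lam * Hᵀ)) ∧
    ((∀ j, lam j < 0) →
      ((-(A * Xhat + B₂ * Yhat)) - (A * Xhat + B₂ * Yhat)ᵀ).PosSemidef ∧
      ((-(A * Xhat + B₂ * Yhat)) - (A * Xhat + B₂ * Yhat)ᵀ).rank = r) := by
  have hAH : A * H + B₂ * R = H * diagonal lam :=
    mul_add_mul_eq_mul_diagonal_of_mulVec_col heig
  have hgram : A * Xhat + B₂ * Yhat = H * diagonal lam * Hᵀ := by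
    rw [hXhat, hYhat, ← Matrix.mul_assoc, ← Matrix.mul_assoc, ← Matrix.add_mul, hAH]
  have hHe : (-(A * Xhat + B₂ * Yhat)) - (A * Xhat + B₂ * Yhat)ᵀ
      = (-2 : ℝ) • (H * diagonal lam * Hᵀ) := by
    rw [hgram, transpose_mul_diagonal_mul_transpose, neg_smul, two_smul]
    abel
  refine ⟨hHe, fun hneg => ?_⟩
  have hscaled :
      (-2 : ℝ) • (H * diagonal lam * Hᵀ) = H * diagonal (fun j => -2 * lam j) * Hᵀ := by
    rw [show (fun j => -2 * lam j) = (-2 : ℝ) • lam from rfl, diagonal_smul, Matrix.mul_smul,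
      Matrix.smul_mul]
  have hpos : ∀ j, 0 < -2 * lam j := fun j => by linarith [hneg j]
  rw [hHe, hscaled]
  exact ⟨posSemidef_mul_diagonal_mul_transpose H fun j => (hpos j).le,
    (rank_mul_diagonal_mul_transpose_of_pos H hpos).trans
      ((rank_eq_card_of_linearIndependent_col H hli).trans (Fintype.card_fin r))⟩

theorem stmt_14 (n m₂ p₁ r : ℕ) (A : Matrix (Fin n) (Fin n) ℝ)
    (B₂ : Matrix (Fin n) (Fin m₂) ℝ) (C₁ : Matrix (Fin p₁) (Fin n) ℝ)
    (D₁₂ : Matrix (Fin p₁) (Fin m₂) ℝ)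
    (lam : Fin r → ℝ)
    (H : Matrix (Fin n) (Fin r) ℝ) (R : Matrix (Fin m₂) (Fin r) ℝ)
    (heig : ∀ j, A.mulVec (fun i => H i j) + B₂.mulVec (fun i => R i j)
        = lam j • (fun i => H i j))
    (hout : ∀ j, C₁.mulVec (fun i => H i j) + D₁₂.mulVec (fun i => R i j) = 0)
    (hli : LinearIndependent ℝ (fun j => (fun i => H i j)))
    (Xhat : Matrix (Fin n) (Fin n) ℝ) (hXhat : Xhat = H * Hᵀ)
    (Yhat : Matrix (Fin m₂) (Fin n) ℝ) (hYhat : Yhat = R * Hᵀ) :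
    ((-(A * Xhat + B₂ * Yhat)) - (A * Xhat + B₂ * Yhat)ᵀ
        = (-2 : ℝ) • (H * Matrix.diagonal lam * Hᵀ)) ∧
    ((∀ j, lam j < 0) →
      ((-(A * Xhat + B₂ * Yhat)) - (A * Xhat + B₂ * Yhat)ᵀ).PosSemidef ∧
      ((-(A * Xhat + B₂ * Yhat)) - (A * Xhat + B₂ * Yhat)ᵀ).rank = r) :=
  stmt_14_general n m₂ r A B₂ lam H R heig hli Xhat hXhat Yhat hYhat
end

section
/- Let T = (Ĥ, J) be non-singular with Ĥ ∈ ℝ^{n×r} and write T^{−1} = [U_1; U_2] (row blocks with U_1 ∈ ℝ^{r×n}, U_2 ∈ ℝ^{(n−r)×n}). Suppose AĤ + B_2R̂ = Ĥ Λ and C_1Ĥ + D_12R̂ = 0, where Λ = Diag(λ_1,…,λ_r). For any K̃ ∈ ℝ^{m_2×(n−r)}, define K := (R̂, K̃) T^{−1}. Then T^{−1}(A + B_2K)T = [[Λ, U_1(AJ + B_2K̃)],[0_{(n−r)×r}, U_2(AJ + B_2K̃)]] and (C_1 + D_12K)T = [0_{p_1×r}, C_1J + D_12K̃]. -/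
open Matrix

/-!
From `T⁻¹ T = I` we get `U₁ Ĥ = I` and `U₂ Ĥ = 0`, and `K T = (R̂, K̃)` by the choice of `K`.
Hence `(A + B₂ K) T = (A Ĥ + B₂ R̂, A J + B₂ K̃) = (Ĥ Λ, A J + B₂ K̃)`: the columns of `Ĥ` span
an invariant subspace of the closed loop, so conjugating by `T` makes it block upper triangular
with `Λ` in the corner. Likewise the first block of
`(C₁ + D₁₂ K) T = (C₁ Ĥ + D₁₂ R̂, C₁ J + D₁₂ K̃)` vanishes.
-/

namespace Matrix

variable {l m n m₁ m₂ k₁ k₂ R : Type*}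

lemma fromCols_add_fromCols [Add R] (A₁ B₁ : Matrix m m₁ R) (A₂ B₂ : Matrix m m₂ R) :
    fromCols A₁ A₂ + fromCols B₁ B₂ = fromCols (A₁ + B₁) (A₂ + B₂) := by
  ext _ (_ | _) <;> rfl

variable [Fintype n] [Semiring R]

lemma add_mul_mul_fromCols [Fintype l] {A : Matrix m n R} {B : Matrix m l R} {K : Matrix l n R}
    {H : Matrix n m₁ R} {J : Matrix n m₂ R} {F : Matrix l m₁ R} {G : Matrix l m₂ R}
    (hK : K * fromCols H J = fromCols F G) :
    (A + B * K) * fromCols H J = fromCols (A * H + B * F) (A * J + B * G) := by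
  rw [Matrix.add_mul, Matrix.mul_assoc, hK, mul_fromCols, mul_fromCols, fromCols_add_fromCols]

lemma fromRows_mul_fromCols_eq_one_iff [DecidableEq m₁] [DecidableEq m₂]
    {U₁ : Matrix m₁ n R} {U₂ : Matrix m₂ n R} {H : Matrix n m₁ R} {J : Matrix n m₂ R} :
    fromRows U₁ U₂ * fromCols H J = 1 ↔
      U₁ * H = 1 ∧ U₁ * J = 0 ∧ U₂ * H = 0 ∧ U₂ * J = 1 := by
  rw [fromRows_mul_fromCols, ← fromBlocks_one, fromBlocks_inj]

lemma fromRows_mul_fromCols_mul_eq_fromBlocks [Fintype m₁] [DecidableEq m₁]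
    {U₁ : Matrix m₁ n R} {U₂ : Matrix m₂ n R} {H : Matrix n m₁ R}
    (hU₁H : U₁ * H = 1) (hU₂H : U₂ * H = 0)
    (Λ : Matrix m₁ k₁ R) (X : Matrix n k₂ R) :
    fromRows U₁ U₂ * fromCols (H * Λ) X = fromBlocks Λ (U₁ * X) 0 (U₂ * X) := by
  rw [fromRows_mul_fromCols, ← Matrix.mul_assoc, ← Matrix.mul_assoc, hU₁H, hU₂H,
    Matrix.one_mul, Matrix.zero_mul]

end Matrix

theorem stmt_18_general (r s m₂ p₁ : ℕ)
    (A : Matrix (Fin r ⊕ Fin s) (Fin r ⊕ Fin s) ℝ)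
    (B₂ : Matrix (Fin r ⊕ Fin s) (Fin m₂) ℝ)
    (C₁ : Matrix (Fin p₁) (Fin r ⊕ Fin s) ℝ)
    (D₁₂ : Matrix (Fin p₁) (Fin m₂) ℝ)
    (Hhat : Matrix (Fin r ⊕ Fin s) (Fin r) ℝ) (J : Matrix (Fin r ⊕ Fin s) (Fin s) ℝ)
    (Rhat : Matrix (Fin m₂) (Fin r) ℝ)
    (lam : Fin r → ℝ)
    (T : Matrix (Fin r ⊕ Fin s) (Fin r ⊕ Fin s) ℝ)
    (hT : T = Matrix.fromCols Hhat J)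
    (U₁ : Matrix (Fin r) (Fin r ⊕ Fin s) ℝ) (U₂ : Matrix (Fin s) (Fin r ⊕ Fin s) ℝ)
    (Tinv : Matrix (Fin r ⊕ Fin s) (Fin r ⊕ Fin s) ℝ)
    (hTinv : Tinv = Matrix.fromRows U₁ U₂)
    (hinv₂ : Tinv * T = 1)
    (heig : A * Hhat + B₂ * Rhat = Hhat * Matrix.diagonal lam)
    (hout : C₁ * Hhat + D₁₂ * Rhat = 0)
    (Ktilde : Matrix (Fin m₂) (Fin s) ℝ)
    (K : Matrix (Fin m₂) (Fin r ⊕ Fin s) ℝ)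
    (hK : K = Matrix.fromCols Rhat Ktilde * Tinv) :
    Tinv * (A + B₂ * K) * T
      = Matrix.fromBlocks (Matrix.diagonal lam) (U₁ * (A * J + B₂ * Ktilde))
          0 (U₂ * (A * J + B₂ * Ktilde)) ∧
    (C₁ + D₁₂ * K) * T = Matrix.fromCols 0 (C₁ * J + D₁₂ * Ktilde) := by
  have hKT : K * T = fromCols Rhat Ktilde := by
    rw [hK, Matrix.mul_assoc, hinv₂, Matrix.mul_one]
  subst hT hTinv
  obtain ⟨hU₁H, -, hU₂H, -⟩ := fromRows_mul_fromCols_eq_one_iff.mp hinv₂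
  constructor
  · rw [Matrix.mul_assoc, add_mul_mul_fromCols hKT, heig,
      fromRows_mul_fromCols_mul_eq_fromBlocks hU₁H hU₂H]
  · rw [add_mul_mul_fromCols hKT, hout]

theorem stmt_18 (r s m₂ p₁ : ℕ)
    (A : Matrix (Fin r ⊕ Fin s) (Fin r ⊕ Fin s) ℝ)
    (B₂ : Matrix (Fin r ⊕ Fin s) (Fin m₂) ℝ)
    (C₁ : Matrix (Fin p₁) (Fin r ⊕ Fin s) ℝ)
    (D₁₂ : Matrix (Fin p₁) (Fin m₂) ℝ)
    (Hhat : Matrix (Fin r ⊕ Fin s) (Fin r) ℝ) (J : Matrix (Fin r ⊕ Fin s) (Fin s) ℝ)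
    (Rhat : Matrix (Fin m₂) (Fin r) ℝ)
    (lam : Fin r → ℝ)
    (T : Matrix (Fin r ⊕ Fin s) (Fin r ⊕ Fin s) ℝ)
    (hT : T = Matrix.fromCols Hhat J)
    (U₁ : Matrix (Fin r) (Fin r ⊕ Fin s) ℝ) (U₂ : Matrix (Fin s) (Fin r ⊕ Fin s) ℝ)
    (Tinv : Matrix (Fin r ⊕ Fin s) (Fin r ⊕ Fin s) ℝ)
    (hTinv : Tinv = Matrix.fromRows U₁ U₂)
    (hinv₁ : T * Tinv = 1) (hinv₂ : Tinv * T = 1)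
    (heig : A * Hhat + B₂ * Rhat = Hhat * Matrix.diagonal lam)
    (hout : C₁ * Hhat + D₁₂ * Rhat = 0)
    (Ktilde : Matrix (Fin m₂) (Fin s) ℝ)
    (K : Matrix (Fin m₂) (Fin r ⊕ Fin s) ℝ)
    (hK : K = Matrix.fromCols Rhat Ktilde * Tinv) :
    Tinv * (A + B₂ * K) * T
      = Matrix.fromBlocks (Matrix.diagonal lam) (U₁ * (A * J + B₂ * Ktilde))
          0 (U₂ * (A * J + B₂ * Ktilde)) ∧
    (C₁ + D₁₂ * K) * T = Matrix.fromCols 0 (C₁ * J + D₁₂ * Ktilde) :=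
  stmt_18_general r s m₂ p₁ A B₂ C₁ D₁₂ Hhat J Rhat lam T hT U₁ U₂ Tinv hTinv hinv₂ heig hout Ktilde
    K hK
end
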